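/- arXiv:1503.04562 — 2 statements merged into one kernel-verified Lean document; each statement's English description precedes it below -/
import Mathlib

section
/- Let n ≥ 4 and let G = 2.A_n be the double cover of the alternating group A_n, with central element z of order 2 and projection π : G → A_n. An element x ∈ G with x ∉ {1, z} is an involution if and only if π(x) is an l-fold transposition for some l with l ≡ 0 (mod 4). -/
/-! Double covers `2^α.S_n` of the symmetric groups, via the presentation with
generators `z, t_1, …, t_{n-1}` and relations `z² = 1`, `t_j² = z^α`,
`(t_j t_{j+1})³ = z^α`, `[z, t_j] = 1`, and `t_j t_k = z t_k t_j` for `|j - k| > 1`.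
Here `α = 0` gives `2^+.S_n` and `α = 1` gives `2^-.S_n`. -/

namespace DoubleCover

/-- Generators: `Sum.inl ()` is `z`; `Sum.inr j` is `t_{j+1}` for `j : Fin (n - 1)`. -/
abbrev Gen (n : ℕ) := Unit ⊕ Fin (n - 1)

/-- The word `z` in the free group on the generators. -/
def zw (n : ℕ) : FreeGroup (Gen n) := FreeGroup.of (Sum.inl ())

/-- The word `t_{j+1}` in the free group on the generators. -/
def tw (n : ℕ) (j : Fin (n - 1)) : FreeGroup (Gen n) := FreeGroup.of (Sum.inr j)

/-- The relations of the presentation of `2^α.S_n`. -/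
def rels (n α : ℕ) : Set (FreeGroup (Gen n)) :=
  {r | r = zw n ^ 2
    ∨ (∃ j, r = tw n j ^ 2 * (zw n ^ α)⁻¹)
    ∨ (∃ j k : Fin (n - 1), (j : ℕ) + 1 = (k : ℕ) ∧
        r = (tw n j * tw n k) ^ 3 * (zw n ^ α)⁻¹)
    ∨ (∃ j, r = zw n * tw n j * (zw n)⁻¹ * (tw n j)⁻¹)
    ∨ (∃ j k : Fin (n - 1), 1 < Nat.dist (j : ℕ) (k : ℕ) ∧
        r = tw n j * tw n k * (zw n * tw n k * tw n j)⁻¹)}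

/-- The double cover `2^α.S_n` of the symmetric group `S_n`. -/
abbrev Cover (n α : ℕ) := PresentedGroup (rels n α)

/-- The central element `z` of `2^α.S_n`. -/
def z (n α : ℕ) : Cover n α := PresentedGroup.of (Sum.inl ())

/-- The generator `t_{j+1}` of `2^α.S_n`, lifting the transposition `(j+1, j+2)`. -/
def t (n α : ℕ) (j : Fin (n - 1)) : Cover n α := PresentedGroup.of (Sum.inr j)

end DoubleCover

/-- A subgroup is an elementary abelian 2-subgroup iff every element squares to `1`
(this forces it to be abelian). -/
def IsElemAbelianTwo {G : Type*} [Group G] (E : Subgroup G) : Prop :=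
  ∀ x ∈ E, x ^ 2 = 1

/-! Two lifts of the same permutation differ by a central element of order 2, so they have the
same square; as squares of lifts are central, conjugate permutations have lifts with equal squares.
It therefore suffices to square the standard lift `t_1 t_3 ⋯ t_{2l-1}` of an `l`-fold
transposition, which the relations give as `z ^ (α l + l(l-1)/2)`. An even `l`-fold transposition
has `l` even, and then this exponent is even exactly when `4 ∣ l`. Conversely, an involution
`x ∉ {1, z}` maps to a nontrivial involution, that is, to an `l`-fold transposition with
`l > 0`. -/

section CentralKernel

variable {G H : Type*} [Group G] [Group H] {π : G →* H}

theorem eq_one_or_eq_of_mem_zpowers {g k : G} (hg : orderOf g = 2)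
    (hk : k ∈ Subgroup.zpowers g) : k = 1 ∨ k = g := by
  obtain ⟨m, rfl⟩ := Subgroup.mem_zpowers_iff.mp hk
  rw [← zpow_mod_orderOf, hg]
  rcases Int.emod_two_eq_zero_or_one m with h | h <;> simp [h]

theorem sq_eq_sq_of_map_eq (hc : π.ker ≤ Subgroup.center G) (h2 : ∀ k ∈ π.ker, k ^ 2 = 1)
    {x y : G} (h : π x = π y) : x ^ 2 = y ^ 2 := by
  obtain ⟨k, hk, rfl⟩ : ∃ k ∈ π.ker, x = y * k :=
    ⟨y⁻¹ * x, by simp [MonoidHom.mem_ker, h], by group⟩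
  calc (y * k) ^ 2 = y * (k * y) * k := by simp only [sq, mul_assoc]
    _ = y ^ 2 * k ^ 2 := by
      rw [← Subgroup.mem_center_iff.mp (hc hk) y]; simp only [sq, mul_assoc]
    _ = y ^ 2 := by rw [h2 k hk, mul_one]

theorem sq_eq_sq_of_isConj_map (hπ : Function.Surjective π) (hc : π.ker ≤ Subgroup.center G)
    (h2 : ∀ k ∈ π.ker, k ^ 2 = 1) {x y : G} (h : IsConj (π x) (π y))
    (hy : y ^ 2 ∈ Subgroup.center G) : x ^ 2 = y ^ 2 := by
  obtain ⟨c, hcxy⟩ := isConj_iff.mp h.symm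
  obtain ⟨g, rfl⟩ := hπ c
  calc x ^ 2 = (g * y * g⁻¹) ^ 2 := sq_eq_sq_of_map_eq hc h2 (by simp [hcxy])
    _ = g * y ^ 2 * g⁻¹ := by simp only [sq, mul_assoc, inv_mul_cancel_left]
    _ = y ^ 2 := by rw [Subgroup.mem_center_iff.mp hy g]; group

end CentralKernel

namespace Equiv.Perm

section CycleTypeTwo

variable {ι : Type*} [Fintype ι] [DecidableEq ι] {σ : Perm ι} {l : ℕ}

theorem sign_of_cycleType_eq_replicate_two (h : σ.cycleType = Multiset.replicate l 2) :
    sign σ = (-1) ^ l := by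
  rw [sign_of_cycleType, h, Multiset.sum_replicate, Multiset.card_replicate, smul_eq_mul,
    pow_add, pow_mul', neg_one_sq, one_pow, one_mul]

theorem two_mul_le_card_of_cycleType_eq_replicate_two
    (h : σ.cycleType = Multiset.replicate l 2) : 2 * l ≤ Fintype.card ι := by
  have := σ.sum_cycleType_le
  rwa [h, Multiset.sum_replicate, smul_eq_mul, mul_comm] at this

theorem exists_cycleType_eq_replicate_two (h1 : σ ≠ 1) (h2 : σ ^ 2 = 1) :
    ∃ l, 0 < l ∧ σ.cycleType = Multiset.replicate l 2 :=
  ⟨_, card_cycleType_pos.mpr h1, cycleType_of_pow_prime_eq_one (p := 2) h2⟩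

end CycleTypeTwo

-- `(2m+1, 2m+2)` in the 1-based notation of the presentation; `1` when out of range.
def pairSwap (n m : ℕ) : Perm (Fin n) :=
  if h : 2 * m + 1 < n then swap ⟨2 * m, by omega⟩ ⟨2 * m + 1, h⟩ else 1

def pairSwaps (n : ℕ) : ℕ → Perm (Fin n)
  | 0 => 1
  | l + 1 => pairSwaps n l * pairSwap n l

theorem pairSwap_apply_of_ne {n m : ℕ} {x : Fin n} (h0 : (x : ℕ) ≠ 2 * m)
    (h1 : (x : ℕ) ≠ 2 * m + 1) : pairSwap n m x = x := by
  unfold pairSwap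
  split_ifs
  · exact swap_apply_of_ne_of_ne (Fin.ne_of_val_ne h0) (Fin.ne_of_val_ne h1)
  · rfl

theorem pairSwaps_apply_of_le {n l : ℕ} {x : Fin n} (h : 2 * l ≤ x) : pairSwaps n l x = x := by
  induction l with
  | zero => rfl
  | succ k ih =>
    rw [pairSwaps, mul_apply, pairSwap_apply_of_ne (by omega) (by omega), ih (by omega)]

theorem disjoint_pairSwaps_pairSwap (n l : ℕ) : Disjoint (pairSwaps n l) (pairSwap n l) := by
  intro x
  by_cases h : 2 * l ≤ x
  · exact Or.inl (pairSwaps_apply_of_le h)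
  · exact Or.inr (pairSwap_apply_of_ne (by omega) (by omega))

theorem cycleType_pairSwap {n m : ℕ} (h : 2 * m + 1 < n) : (pairSwap n m).cycleType = {2} := by
  have hne : (⟨2 * m, by omega⟩ : Fin n) ≠ ⟨2 * m + 1, h⟩ := by simp
  rw [pairSwap, dif_pos h, (isCycle_swap hne).cycleType, card_support_swap hne]

theorem cycleType_pairSwaps {n l : ℕ} (h : 2 * l ≤ n) :
    (pairSwaps n l).cycleType = Multiset.replicate l 2 := by
  induction l with
  | zero => simp [pairSwaps]
  | succ k ih =>
    rw [pairSwaps, (disjoint_pairSwaps_pairSwap n k).cycleType_mul, ih (by omega),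
      cycleType_pairSwap (by omega), Multiset.replicate_succ, add_comm, Multiset.singleton_add]

end Equiv.Perm

theorem even_mul_add_choose_two_iff {a l : ℕ} (hl : Even l) :
    Even (a * l + l.choose 2) ↔ 4 ∣ l := by
  obtain ⟨m, rfl⟩ := hl
  have hc : (m + m).choose 2 = m * (2 * m - 1) := by
    rw [Nat.choose_two_right, ← two_mul, mul_assoc, Nat.mul_div_cancel_left _ two_pos]
  rw [Nat.even_add, iff_true_intro (Even.mul_left ⟨m, rfl⟩ a), true_iff, hc, Nat.even_mul,
    Nat.even_iff, Nat.even_iff]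
  omega

namespace DoubleCover

variable {n α : ℕ}

theorem mk_eq_one_of_mem_rels {r : FreeGroup (Gen n)} (hr : r ∈ rels n α) :
    PresentedGroup.mk (rels n α) r = 1 :=
  (QuotientGroup.eq_one_iff r).mpr (Subgroup.subset_normalClosure hr)

theorem t_sq (j : Fin (n - 1)) : t n α j ^ 2 = z n α ^ α :=
  mul_inv_eq_one.mp (mk_eq_one_of_mem_rels (Or.inr (Or.inl ⟨j, rfl⟩)))

theorem t_mul_t_of_one_lt_dist {j k : Fin (n - 1)} (h : 1 < Nat.dist j k) :
    t n α j * t n α k = z n α * t n α k * t n α j :=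
  mul_inv_eq_one.mp (mk_eq_one_of_mem_rels (Or.inr (Or.inr (Or.inr (Or.inr ⟨j, k, h, rfl⟩)))))

theorem z_mem_center : z n α ∈ Subgroup.center (Cover n α) := by
  rw [Subgroup.center_eq_iInf (PresentedGroup.closure_range_of _)]
  simp only [Subgroup.mem_iInf, Set.mem_range, Subgroup.mem_centralizer_singleton_iff]
  rintro _ ⟨⟨⟨⟩⟩ | j, rfl⟩
  · rfl
  · exact mul_inv_eq_one.mp
      (mk_eq_one_of_mem_rels (Or.inr (Or.inr (Or.inr (Or.inl ⟨j, rfl⟩)))))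

-- The lift `t_{2m+1}` of `pairSwap n m`; `1` when out of range.
def pairLift (n α m : ℕ) : Cover n α :=
  if h : 2 * m < n - 1 then t n α ⟨2 * m, h⟩ else 1

def pairsLift (n α : ℕ) : ℕ → Cover n α
  | 0 => 1
  | l + 1 => pairsLift n α l * pairLift n α l

theorem pairLift_mul_pairLift {m M : ℕ} (h : m < M) (hM : 2 * M < n - 1) :
    pairLift n α M * pairLift n α m = z n α * pairLift n α m * pairLift n α M := by
  rw [pairLift, pairLift, dif_pos hM, dif_pos (by omega)]
  exact t_mul_t_of_one_lt_dist (by simp only [Nat.dist]; omega)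

theorem pairLift_mul_pairsLift {k M : ℕ} (hk : k ≤ M) (hM : 2 * M < n - 1) :
    pairLift n α M * pairsLift n α k = z n α ^ k * pairsLift n α k * pairLift n α M := by
  induction k with
  | zero => simp [pairsLift]
  | succ k ih =>
    rw [pairsLift, ← mul_assoc, ih (by omega), mul_assoc _ (pairLift n α M),
      pairLift_mul_pairLift (by omega) hM, pow_succ]
    simp only [mul_assoc]
    rw [← mul_assoc (pairsLift n α k) (z n α), Subgroup.mem_center_iff.mp z_mem_center,
      mul_assoc]

theorem pairsLift_sq {l : ℕ} (hl : 2 * l ≤ n) :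
    pairsLift n α l ^ 2 = z n α ^ (α * l + l.choose 2) := by
  induction l with
  | zero => simp [pairsLift]
  | succ k ih =>
    have hk : 2 * k < n - 1 := by omega
    calc pairsLift n α (k + 1) ^ 2
        = pairsLift n α k * (pairLift n α k * pairsLift n α k) * pairLift n α k := by
          rw [pairsLift, sq]; simp only [mul_assoc]
      _ = z n α ^ k * pairsLift n α k ^ 2 * pairLift n α k ^ 2 := by
          rw [pairLift_mul_pairsLift le_rfl hk]
          simp only [mul_assoc]
          rw [← mul_assoc (pairsLift n α k) (z n α ^ k),
            Subgroup.mem_center_iff.mp (Subgroup.pow_mem _ z_mem_center k)]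
          simp only [sq, mul_assoc]
      _ = z n α ^ (α * (k + 1) + (k + 1).choose 2) := by
          rw [ih (by omega), pairLift, dif_pos hk, t_sq, ← pow_add, ← pow_add,
            Nat.choose_succ_succ', Nat.choose_one_right]
          congr 1
          ring

theorem map_pairsLift (hn : 0 < n) (π : Cover n α →* Equiv.Perm (Fin n))
    (hπt : ∀ j : Fin (n - 1), π (t n α j) =
      Equiv.swap (Fin.castLE (by omega) j) (Fin.castLE (by omega) j.succ)) (l : ℕ) :
    π (pairsLift n α l) = Equiv.Perm.pairSwaps n l := by
  have hπ : ∀ m, π (pairLift n α m) = Equiv.Perm.pairSwap n m := by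
    intro m
    unfold pairLift Equiv.Perm.pairSwap
    split_ifs with h h' h'
    · exact hπt _
    all_goals first | omega | exact map_one π
  induction l with
  | zero => exact map_one π
  | succ k ih => rw [pairsLift, Equiv.Perm.pairSwaps, map_mul, ih, hπ]

theorem sq_eq_z_pow_of_cycleType_eq_replicate_two (hn : 0 < n)
    (π : Cover n α →* Equiv.Perm (Fin n))
    (hπt : ∀ j : Fin (n - 1), π (t n α j) =
      Equiv.swap (Fin.castLE (by omega) j) (Fin.castLE (by omega) j.succ))
    (hπsurj : Function.Surjective π) (hπker : π.ker = Subgroup.zpowers (z n α))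
    (hz : orderOf (z n α) = 2) {x : Cover n α} {l : ℕ}
    (hx : (π x).cycleType = Multiset.replicate l 2) :
    x ^ 2 = z n α ^ (α * l + l.choose 2) := by
  have hl : 2 * l ≤ n := by
    simpa using Equiv.Perm.two_mul_le_card_of_cycleType_eq_replicate_two hx
  have hker : ∀ k ∈ π.ker, k = 1 ∨ k = z n α := fun k hk =>
    eq_one_or_eq_of_mem_zpowers hz (hπker ▸ hk)
  have hc : π.ker ≤ Subgroup.center (Cover n α) := fun k hk => by
    rcases hker k hk with rfl | rfl
    exacts [Subgroup.one_mem _, z_mem_center]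
  have h2 : ∀ k ∈ π.ker, k ^ 2 = 1 := fun k hk => by
    rcases hker k hk with rfl | rfl
    exacts [one_pow 2, hz ▸ pow_orderOf_eq_one _]
  rw [← pairsLift_sq hl]
  refine sq_eq_sq_of_isConj_map hπsurj hc h2 ?_ ?_
  · rw [Equiv.Perm.isConj_iff_cycleType_eq, map_pairsLift hn π hπt,
      Equiv.Perm.cycleType_pairSwaps hl, hx]
  · rw [pairsLift_sq hl]
    exact Subgroup.pow_mem _ z_mem_center _

end DoubleCover

/-- For `n ≥ 4` and `G = 2.A_n = π⁻¹(A_n)` with central element `z` of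
order 2: a noncentral element `x` of `G` is an involution if and only if `π x` is an
`l`-fold transposition (i.e. has cycle type `(2^l, 1^{n-2l})`) for some positive `l` with
`l ≡ 0 (mod 4)`. -/
theorem involution_iff_lfold_transposition_in_two_An
    (n : ℕ) (hn : 4 ≤ n) (α : ℕ)
    (π : DoubleCover.Cover n α →* Equiv.Perm (Fin n))
    (hπt : ∀ j : Fin (n - 1), π (DoubleCover.t n α j) =
      Equiv.swap (Fin.castLE (by omega) j) (Fin.castLE (by omega) j.succ))
    (hπsurj : Function.Surjective π)
    (hπker : π.ker = Subgroup.zpowers (DoubleCover.z n α))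
    (hz : orderOf (DoubleCover.z n α) = 2)
    (x : DoubleCover.Cover n α)
    (hxA : x ∈ Subgroup.comap π (alternatingGroup (Fin n)))
    (hx1 : x ≠ 1) (hxz : x ≠ DoubleCover.z n α) :
    x ^ 2 = 1 ↔
      ∃ l : ℕ, 0 < l ∧ l % 4 = 0 ∧ (π x).cycleType = Multiset.replicate l 2 := by
  have hsq {l : ℕ} (hl : (π x).cycleType = Multiset.replicate l 2) :=
    DoubleCover.sq_eq_z_pow_of_cycleType_eq_replicate_two (by omega) π hπt hπsurj hπker hz hl
  have hz_pow (k : ℕ) : DoubleCover.z n α ^ k = 1 ↔ Even k := by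
    rw [← orderOf_dvd_iff_pow_eq_one, hz, even_iff_two_dvd]
  have heven {l : ℕ} (hl : (π x).cycleType = Multiset.replicate l 2) : Even l := by
    have hsign := Equiv.Perm.mem_alternatingGroup.mp (Subgroup.mem_comap.mp hxA)
    rwa [Equiv.Perm.sign_of_cycleType_eq_replicate_two hl,
      neg_one_pow_eq_one_iff_even (by decide)] at hsign
  constructor
  · intro hx2
    have hπx : π x ≠ 1 := fun h =>
      (eq_one_or_eq_of_mem_zpowers hz (hπker ▸ MonoidHom.mem_ker.mpr h)).elim hx1 hxz
    obtain ⟨l, hl0, hl⟩ :=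
      Equiv.Perm.exists_cycleType_eq_replicate_two hπx (by rw [← map_pow, hx2, map_one])
    rw [hsq hl, hz_pow, even_mul_add_choose_two_iff (heven hl)] at hx2
    exact ⟨l, hl0, Nat.mod_eq_zero_of_dvd hx2, hl⟩
  · rintro ⟨l, -, hl4, hl⟩
    rw [hsq hl, hz_pow, even_mul_add_choose_two_iff (heven hl)]
    exact Nat.dvd_of_mod_eq_zero hl4
end

section
/- Let n ∈ {6, 7}. If G is a finite perfect group with a cyclic central subgroup Z of order 3 such that G/Z is isomorphic to the alternating group A_n (i.e. G is the triple cover 3.A_n), then every Sylow 2-subgroup of G is isomorphic to the dihedral group of order 8. If G is a finite perfect group with a cyclic central subgroup Z of order 6 such that G/Z ≅ A_n (i.e. G is the six-fold cover 6.A_n), then every Sylow 2-subgroup of G is isomorphic to the generalized quaternion group of order 16. -/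
/-!
The Sylow 2-subgroups of `A_6` and `A_7` have order 8 and contain the dihedral group generated by
`(0 1 2 3)(4 5)` and `(0 2)(4 5)`, so they are dihedral.

For `3.A_n` the kernel has odd order, so a Sylow 2-subgroup maps isomorphically onto one of `A_n`.

For `6.A_n` a Sylow 2-subgroup `P` has order 16 and maps onto `D_8` with kernel `⟨z⟩`, `z` a
central involution. If some involution of `P` survived in `A_n`, then, since all involutions of
`A_n` are conjugate and the kernel has order `2 · 3`, every involution of `D_8` would lift to an
involution of `P`, and lifts of the dihedral generators would generate a complement `D` of `⟨z⟩`.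
As `G` is perfect, the transfer `G → P / D ≅ C_2` is trivial, yet it sends `z` to
`z ^ |G : P| ≡ z ≠ 1` because the index is odd. Hence `z` is the only involution of `P`, the
lifts `x, y` of the generators satisfy `x ^ 4 = y ^ 2 = z` and `y x y⁻¹ = x⁻¹`, and `P ≅ Q_16`.
-/

theorem MonoidHom.card_eq_card_ker_mul_of_surjective {G A : Type*} [Group G] [Group A]
    {F : G →* A} (hF : Function.Surjective F) : Nat.card G = Nat.card F.ker * Nat.card A := by
  rw [Subgroup.card_eq_card_quotient_mul_card_subgroup F.ker,
    Nat.card_congr (QuotientGroup.quotientKerEquivOfSurjective F hF).toEquiv, mul_comm]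

theorem orderOf_eq_two_mul {M : Type*} [Monoid M] {x : M} {n : ℕ} (hn : n ∣ orderOf x)
    (hx : x ^ (2 * n) = 1) (hxn : x ^ n ≠ 1) : orderOf x = 2 * n := by
  obtain ⟨c, hc⟩ := hn
  have hn0 : 0 < n := Nat.pos_of_ne_zero (by rintro rfl; exact hxn (pow_zero x))
  have hc2 : c ∣ 2 := Nat.dvd_of_mul_dvd_mul_left hn0
    (by rw [← hc, mul_comm]; exact orderOf_dvd_of_pow_eq_one hx)
  have hc1 : c ≠ 1 := by rintro rfl; exact hxn (by rw [← mul_one n, ← hc, pow_orderOf_eq_one])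
  obtain rfl : c = 2 := by
    have := Nat.le_of_dvd two_pos hc2
    interval_cases c <;> simp_all
  rw [hc, mul_comm]

section Presentations

variable {H : Type*} [Group H] {x y : H}

theorem zpow_val_eq_zpow_of_cast_eq {m : ℕ} [NeZero m] (hx : x ^ m = 1) {k : ZMod m} {c : ℤ}
    (h : (c : ZMod m) = k) : x ^ (k.val : ℤ) = x ^ c := by
  obtain ⟨t, ht⟩ : (m : ℤ) ∣ (k.val : ℤ) - c := by
    rw [← ZMod.intCast_zmod_eq_zero_iff_dvd, Int.cast_sub, h]
    simp
  rw [show (k.val : ℤ) = c + m * t by omega, zpow_add, zpow_mul, zpow_natCast, hx, one_zpow,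
    mul_one]

theorem zpow_mul_eq_mul_zpow_neg (hxy : y * x * y⁻¹ = x⁻¹) (a : ℤ) :
    x ^ a * y = y * x ^ (-a) := by
  rw [eq_comm, ← mul_inv_eq_iff_eq_mul, ← conj_zpow, hxy, inv_zpow, zpow_neg, inv_inv]

theorem sq_eq_one_of_mul_zpow_eq_one (hxy : y * x * y⁻¹ = x⁻¹) {a : ℤ} (h : y * x ^ a = 1) :
    x ^ 2 = 1 := by
  have hy : y = x ^ (-a) := by rw [zpow_neg]; exact eq_inv_of_mul_eq_one_left h
  have hinv : x⁻¹ = x := by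
    rw [← hxy, hy, (Commute.zpow_self x (-a)).eq, mul_inv_cancel_right]
  rw [sq]
  nth_rewrite 2 [← hinv]
  exact mul_inv_cancel x

namespace DihedralGroup

variable {n : ℕ}

theorem sr_ne_one (i : ZMod n) : sr i ≠ 1 := by
  rw [one_def]
  exact fun h => by cases h

theorem sq_r_one_pow_half (hn : Even n) : ((r 1 : DihedralGroup n) ^ (n / 2)) ^ 2 = 1 := by
  rw [← pow_mul, Nat.div_mul_cancel (even_iff_two_dvd.1 hn), r_one_pow_n]

variable [NeZero n]

theorem r_one_pow_half_ne_one (hn : Even n) : (r 1 : DihedralGroup n) ^ (n / 2) ≠ 1 := by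
  have := NeZero.ne n
  refine pow_ne_one_of_lt_orderOf (by grind) ?_
  rw [orderOf_r_one]
  omega

def lift (x y : H) (hx : x ^ n = 1) (hy : y ^ 2 = 1) (hxy : y * x * y⁻¹ = x⁻¹) :
    DihedralGroup n →* H where
  toFun
    | r i => x ^ (i.val : ℤ)
    | sr i => y * x ^ (i.val : ℤ)
  map_one' := by simp [← r_zero]
  map_mul' := by
    have hcast (k : ZMod n) (c : ℤ) (h : (c : ZMod n) = k) := zpow_val_eq_zpow_of_cast_eq hx h
    rintro (i | i) (j | j) <;> simp only [r_mul_r, r_mul_sr, sr_mul_r, sr_mul_sr]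
    · rw [hcast _ (i.val + j.val) (by simp), zpow_add]
    · rw [hcast _ (-i.val + j.val) (by simp; ring), ← mul_assoc, zpow_mul_eq_mul_zpow_neg hxy,
        mul_assoc, zpow_add]
    · rw [hcast _ (i.val + j.val) (by simp), zpow_add, mul_assoc]
    · rw [hcast _ (-i.val + j.val) (by simp; ring), ← mul_assoc, mul_assoc y,
        zpow_mul_eq_mul_zpow_neg hxy, ← mul_assoc, ← sq, hy, one_mul, zpow_add]

@[simp] theorem lift_r (hx : x ^ n = 1) (hy : y ^ 2 = 1) (hxy : y * x * y⁻¹ = x⁻¹)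
    (i : ZMod n) : lift x y hx hy hxy (r i) = x ^ (i.val : ℤ) := rfl

@[simp] theorem lift_sr (hx : x ^ n = 1) (hy : y ^ 2 = 1) (hxy : y * x * y⁻¹ = x⁻¹)
    (i : ZMod n) : lift x y hx hy hxy (sr i) = y * x ^ (i.val : ℤ) := rfl

theorem lift_injective (hn : 2 < n) (ho : orderOf x = n) (hx : x ^ n = 1) (hy : y ^ 2 = 1)
    (hxy : y * x * y⁻¹ = x⁻¹) : Function.Injective (lift x y hx hy hxy) := by
  rw [injective_iff_map_eq_one]
  rintro (i | i) h
  · rw [lift_r, zpow_natCast, ← orderOf_dvd_iff_pow_eq_one, ho] at h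
    rw [(ZMod.val_eq_zero i).1 (Nat.eq_zero_of_dvd_of_lt h i.val_lt), r_zero]
  · have := Nat.le_of_dvd two_pos
      (ho ▸ orderOf_dvd_of_pow_eq_one (sq_eq_one_of_mul_zpow_eq_one hxy h))
    omega

theorem exists_comp_eq_id_of_sq_eq_one (hn : Even n) (f : H →* DihedralGroup n)
    (hf : Function.Surjective f) (hlift : ∀ w, f w ^ 2 = 1 → f w ≠ 1 → w ^ 2 = 1) :
    ∃ g : DihedralGroup n →* H, f.comp g = MonoidHom.id _ := by
  obtain ⟨x, hx⟩ := hf (r 1)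
  obtain ⟨y, hy⟩ := hf (sr 0)
  have hxn : x ^ n = 1 := by
    have := hlift (x ^ (n / 2)) (by rw [map_pow, hx]; exact sq_r_one_pow_half hn)
      (by rw [map_pow, hx]; exact r_one_pow_half_ne_one hn)
    rwa [← pow_mul, Nat.div_mul_cancel (even_iff_two_dvd.1 hn)] at this
  have hy2 : y ^ 2 = 1 := hlift y (by rw [hy, sq, sr_mul_self]) (hy ▸ sr_ne_one 0)
  have hyx : f (y * x) = sr 1 := by rw [map_mul, hx, hy, sr_mul_r, zero_add]
  have hyx2 : (y * x) ^ 2 = 1 := hlift _ (by rw [hyx, sq, sr_mul_self]) (hyx ▸ sr_ne_one 1)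
  have hxy : y * x * y⁻¹ = x⁻¹ := by
    rw [inv_eq_of_mul_eq_one_right (by rwa [sq] at hy2)]
    exact eq_inv_of_mul_eq_one_left (by rwa [sq, ← mul_assoc] at hyx2)
  refine ⟨lift x y hxn hy2 hxy, MonoidHom.ext ?_⟩
  rintro (i | i) <;> simp [hx, hy]

end DihedralGroup

namespace QuaternionGroup

variable {n : ℕ} [NeZero n]

def lift (x y : H) (hx : x ^ (2 * n) = 1) (hy : y ^ 2 = x ^ n) (hxy : y * x * y⁻¹ = x⁻¹) :
    QuaternionGroup n →* H where
  toFun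
    | a i => x ^ (i.val : ℤ)
    | xa i => y * x ^ (i.val : ℤ)
  map_one' := by simp [← a_zero]
  map_mul' := by
    have hcast (k : ZMod (2 * n)) (c : ℤ) (h : (c : ZMod (2 * n)) = k) :=
      zpow_val_eq_zpow_of_cast_eq hx h
    rintro (i | i) (j | j) <;> simp only [a_mul_a, a_mul_xa, xa_mul_a, xa_mul_xa]
    · rw [hcast _ (i.val + j.val) (by simp), zpow_add]
    · rw [hcast _ (-i.val + j.val) (by simp; ring), ← mul_assoc, zpow_mul_eq_mul_zpow_neg hxy,
        mul_assoc, zpow_add]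
    · rw [hcast _ (i.val + j.val) (by simp), zpow_add, mul_assoc]
    · rw [hcast _ (n + (-i.val + j.val)) (by simp; ring), ← mul_assoc, mul_assoc y,
        zpow_mul_eq_mul_zpow_neg hxy, ← mul_assoc, ← sq, hy, zpow_add, zpow_add, zpow_natCast,
        mul_assoc]

theorem lift_injective (hn : 1 < n) (ho : orderOf x = 2 * n) (hx : x ^ (2 * n) = 1)
    (hy : y ^ 2 = x ^ n) (hxy : y * x * y⁻¹ = x⁻¹) :
    Function.Injective (lift x y hx hy hxy) := by
  rw [injective_iff_map_eq_one]
  rintro (i | i) h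
  · change x ^ (i.val : ℤ) = 1 at h
    rw [zpow_natCast, ← orderOf_dvd_iff_pow_eq_one, ho] at h
    rw [(ZMod.val_eq_zero i).1 (Nat.eq_zero_of_dvd_of_lt h i.val_lt), a_zero]
  · have := Nat.le_of_dvd two_pos
      (ho ▸ orderOf_dvd_of_pow_eq_one (sq_eq_one_of_mul_zpow_eq_one hxy h))
    omega

end QuaternionGroup

end Presentations

theorem MonoidHom.sq_eq_sq_of_card_ker_eq_two {P D : Type*} [Group P] [Group D] {f : P →* D}
    (hker : Nat.card f.ker = 2) (hinv : ∀ t : P, t ^ 2 = 1 → f t = 1) {w v : P}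
    (hw : f w ^ 2 = 1) (hw1 : f w ≠ 1) (hv : f v ^ 2 = 1) (hv1 : f v ≠ 1) : w ^ 2 = v ^ 2 := by
  obtain ⟨z, -, hz⟩ := (Nat.card_eq_two_iff' (1 : f.ker)).1 hker
  have hw' : w ^ 2 ∈ f.ker := by rwa [MonoidHom.mem_ker, map_pow]
  have hv' : v ^ 2 ∈ f.ker := by rwa [MonoidHom.mem_ker, map_pow]
  have := (hz ⟨w ^ 2, hw'⟩ fun h => hw1 (hinv w (congrArg Subtype.val h))).trans
    (hz ⟨v ^ 2, hv'⟩ fun h => hv1 (hinv v (congrArg Subtype.val h))).symm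
  exact congrArg Subtype.val this

open DihedralGroup in
theorem QuaternionGroup.nonempty_mulEquiv_of_card_ker_eq_two {P : Type*} [Group P] [Finite P]
    {n : ℕ} [NeZero n] (hn : Even n) (f : P →* DihedralGroup n) (hf : Function.Surjective f)
    (hker : Nat.card f.ker = 2) (hinv : ∀ t : P, t ^ 2 = 1 → f t = 1) :
    Nonempty (P ≃* QuaternionGroup n) := by
  obtain ⟨x, hx⟩ := hf (r 1)
  obtain ⟨y, hy⟩ := hf (sr 0)
  have hxh : f (x ^ (n / 2)) = r 1 ^ (n / 2) := by rw [map_pow, hx]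
  have hyx : f (y * x) = sr 1 := by rw [map_mul, hx, hy, sr_mul_r, zero_add]
  have hxn : (x ^ (n / 2)) ^ 2 = x ^ n := by
    rw [← pow_mul, Nat.div_mul_cancel (even_iff_two_dvd.1 hn)]
  have hy2 : y ^ 2 = x ^ n := hxn ▸ f.sq_eq_sq_of_card_ker_eq_two hker hinv
    (by rw [hy, sq, sr_mul_self]) (hy ▸ sr_ne_one 0)
    (hxh ▸ sq_r_one_pow_half hn) (hxh ▸ r_one_pow_half_ne_one hn)
  have hyx2 : (y * x) ^ 2 = y ^ 2 := f.sq_eq_sq_of_card_ker_eq_two hker hinv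
    (by rw [hyx, sq, sr_mul_self]) (hyx ▸ sr_ne_one 1) (by rw [hy, sq, sr_mul_self])
    (hy ▸ sr_ne_one 0)
  have hxy : y * x * y⁻¹ = x⁻¹ := by
    rw [mul_inv_eq_iff_eq_mul, eq_inv_mul_iff_mul_eq]
    rw [sq, sq, mul_assoc] at hyx2
    exact mul_left_cancel hyx2
  have hx2n : x ^ (2 * n) = 1 := by
    have hk := pow_card_eq_one'
      (x := (⟨x ^ n, by rw [MonoidHom.mem_ker, map_pow, hx, r_one_pow_n]⟩ : f.ker))
    rw [hker] at hk
    rw [mul_comm, pow_mul]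
    exact congrArg Subtype.val hk
  have hox : orderOf x = 2 * n := orderOf_eq_two_mul
    (orderOf_r_one (n := n) ▸ hx ▸ orderOf_map_dvd f x) hx2n
    fun h => r_one_pow_half_ne_one hn (hxh ▸ hinv _ (hxn ▸ h))
  have hcard : Nat.card (QuaternionGroup n) = Nat.card P := by
    rw [MonoidHom.card_eq_card_ker_mul_of_surjective hf, hker, nat_card,
      Nat.card_eq_fintype_card, QuaternionGroup.card]
    ring
  have hinj := QuaternionGroup.lift_injective (by grind [NeZero.ne n]) hox hx2n hy2 hxy
  exact ⟨(MulEquiv.ofBijective _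
    ((Nat.bijective_iff_injective_and_card _).2 ⟨hinj, hcard⟩)).symm⟩

theorem Sylow.card_eq_pow_of_card_eq_pow_mul {G : Type*} [Group G] [Finite G] {p k m : ℕ}
    [hp : Fact p.Prime] (P : Sylow p G) (hG : Nat.card G = p ^ k * m) (hm : ¬ p ∣ m) :
    Nat.card P = p ^ k := by
  obtain ⟨j, hj⟩ := IsPGroup.iff_card.mp P.isPGroup'
  refine Nat.dvd_antisymm ?_ (P.pow_dvd_card_of_pow_dvd_card ⟨m, hG⟩)
  have hcop : (Nat.card P).Coprime m := hj ▸ (hp.out.coprime_iff_not_dvd.2 hm).pow_left j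
  exact hcop.dvd_of_dvd_mul_right (hG ▸ P.1.card_subgroup_dvd_card)

theorem Sylow.nonempty_mulEquiv_map_of_not_dvd_card_ker {G A : Type*} [Group G] [Group A]
    [Finite G] {p : ℕ} [hp : Fact p.Prime] (F : G →* A) (hker : ¬ p ∣ Nat.card F.ker)
    (P : Sylow p G) : Nonempty (P ≃* (P : Subgroup G).map F) := by
  have hdisj : Disjoint (P : Subgroup G) F.ker := by
    obtain ⟨k, hk⟩ := IsPGroup.iff_card.mp P.isPGroup'
    exact Subgroup.disjoint_of_coprime_natCard
      (hk ▸ (hp.out.coprime_iff_not_dvd.2 hker).pow_left k)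
  have hinj : Function.Injective (F.subgroupMap P) := by
    rw [injective_iff_map_eq_one]
    exact fun w hw => Subtype.ext (Subgroup.disjoint_def.1 hdisj w.2 (congrArg Subtype.val hw))
  exact ⟨MulEquiv.ofBijective _ ⟨hinj, F.subgroupMap_surjective P⟩⟩

theorem mem_of_index_eq_two_of_commutator_eq_top {G : Type*} [Group G]
    (hG : commutator G = ⊤) {P : Subgroup G} [P.FiniteIndex] (hP : Odd P.index) {z : G}
    (hz : z ∈ Subgroup.center G) (hzP : z ∈ P) {Q : Subgroup P} (hQ : Q.index = 2) :
    ⟨z, hzP⟩ ∈ Q := by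
  have := Subgroup.normal_of_index_eq_two hQ
  have : IsCyclic (P ⧸ Q) :=
    isCyclic_of_prime_card (p := 2) (by rw [← Subgroup.index_eq_card, hQ])
  let _ : CommGroup (P ⧸ Q) := IsCyclic.commGroup
  -- the transfer is trivial on a perfect group and sends a central `z` to `z ^ P.index`
  have htransfer := MonoidHom.transfer_eq_pow (QuotientGroup.mk' Q) z fun k g _ => by
    rw [Subgroup.mem_center_iff.1 (pow_mem hz k) g⁻¹, inv_mul_cancel_right]
  rw [hG.ge.trans (Abelianization.commutator_subset_ker _) (Subgroup.mem_top z), eq_comm,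
    QuotientGroup.mk'_apply, QuotientGroup.eq_one_iff] at htransfer
  obtain ⟨k, hk⟩ := hP
  have hzk : (⟨z, hzP⟩ : P) ^ P.index ∈ Q := htransfer
  rw [hk, pow_succ, pow_mul] at hzk
  exact (Q.mul_mem_cancel_left (pow_mem (Subgroup.sq_mem_of_index_two hQ _) k)).1 hzk

theorem exists_lift_sq_ne_one_of_commutator_eq_top {G : Type*} [Group G]
    (hG : commutator G = ⊤) {P : Subgroup G} [P.FiniteIndex] (hP : Odd P.index) {n : ℕ}
    [NeZero n] (hn : Even n) (f : P →* DihedralGroup n) (hf : Function.Surjective f)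
    (hker : Nat.card f.ker = 2) (hcent : ∀ z ∈ f.ker, (z : G) ∈ Subgroup.center G) :
    ∃ w, f w ^ 2 = 1 ∧ f w ≠ 1 ∧ w ^ 2 ≠ 1 := by
  by_contra! hlift
  obtain ⟨g, hg⟩ := DihedralGroup.exists_comp_eq_id_of_sq_eq_one hn f hf hlift
  have hfg (d : DihedralGroup n) : f (g d) = d := DFunLike.congr_fun hg d
  have hginj : Function.Injective g := fun a b h => by rw [← hfg a, h, hfg]
  have hindex : g.range.index = 2 := by
    have hcard := g.range.card_mul_index
    rw [← Nat.card_congr (MonoidHom.ofInjective hginj).toEquiv,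
      MonoidHom.card_eq_card_ker_mul_of_surjective hf, hker, mul_comm] at hcard
    exact Nat.eq_of_mul_eq_mul_right Nat.card_pos hcard
  obtain ⟨z, hz1, -⟩ := (Nat.card_eq_two_iff' (1 : f.ker)).1 hker
  obtain ⟨d, hd⟩ :=
    mem_of_index_eq_two_of_commutator_eq_top hG hP (hcent z z.2) (z : P).2 hindex
  have hd1 : d = 1 := by rw [← hfg d, hd]; exact z.2
  exact hz1 (Subtype.ext (hd.symm.trans (by rw [hd1, map_one]; rfl)))

theorem exists_mem_ker_sq_eq_of_isConj {G A : Type*} [Group G] [Group A] {F : G →* A}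
    (hF : Function.Surjective F) (hcent : F.ker ≤ Subgroup.center G) {t w : G} (ht : t ^ 2 = 1)
    (hconj : IsConj (F t) (F w)) : ∃ k ∈ F.ker, w ^ 2 = k ^ 2 := by
  obtain ⟨c, hc⟩ := isConj_iff.1 hconj
  obtain ⟨c, rfl⟩ := hF c
  set u := c * t * c⁻¹
  have hk : w * u⁻¹ ∈ F.ker := by
    rw [MonoidHom.mem_ker, map_mul, map_inv, map_mul, map_mul, map_inv, hc, mul_inv_cancel]
  have hcomm : Commute (w * u⁻¹) u := (Subgroup.mem_center_iff.1 (hcent hk) u).symm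
  refine ⟨w * u⁻¹, hk, ?_⟩
  calc w ^ 2 = (w * u⁻¹ * u) ^ 2 := by rw [inv_mul_cancel_right]
    _ = (w * u⁻¹) ^ 2 * u ^ 2 := hcomm.mul_pow 2
    _ = (w * u⁻¹) ^ 2 := by rw [conj_pow, ht, mul_one, mul_inv_cancel, mul_one]

theorem sq_eq_one_of_isConj {G A : Type*} [Group G] [Group A] {F : G →* A}
    (hF : Function.Surjective F) (hcent : F.ker ≤ Subgroup.center G) {m : ℕ} (hm : Odd m)
    (hker : Nat.card F.ker = 2 * m) {t w : G} (ht : t ^ 2 = 1) (hconj : IsConj (F t) (F w))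
    {k : ℕ} (hw : w ^ 2 ^ k = 1) : w ^ 2 = 1 := by
  obtain ⟨c, hc, hwc⟩ := exists_mem_ker_sq_eq_of_isConj hF hcent ht hconj
  have hw2m : w ^ (2 * m) = 1 := by
    rw [pow_mul, hwc, ← pow_mul, ← hker]
    exact congrArg Subtype.val (pow_card_eq_one' (x := (⟨c, hc⟩ : F.ker)))
  have hcop : (orderOf w).Coprime m := ((Nat.coprime_two_left.2 hm).pow_left k).coprime_dvd_left
    (orderOf_dvd_of_pow_eq_one hw)
  exact orderOf_dvd_iff_pow_eq_one.1 (hcop.dvd_of_dvd_mul_right (orderOf_dvd_of_pow_eq_one hw2m))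

open Equiv.Perm in
theorem Equiv.Perm.cycleType_eq_replicate_two_two {α : Type*} [Fintype α] [DecidableEq α]
    (hα : Fintype.card α < 8) {σ : Perm α} (hσ : orderOf σ = 2) (hsign : sign σ = 1) :
    σ.cycleType = Multiset.replicate 2 2 := by
  obtain ⟨k, hk⟩ := cycleType_prime_order (hσ ▸ Nat.prime_two)
  rw [hσ] at hk
  have hsupp : 2 * (k + 1) ≤ Fintype.card α := by
    have := σ.support.card_le_univ
    rw [← sum_cycleType, hk, Multiset.sum_replicate, smul_eq_mul] at this
    omega
  have hsgn := sign_of_cycleType σ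
  rw [hsign, hk, Multiset.sum_replicate, Multiset.card_replicate] at hsgn
  rw [hk]
  have hk2 : k ≤ 2 := by omega
  interval_cases k <;> first | rfl | norm_num at hsgn

open Equiv.Perm in
theorem alternatingGroup.isConj_of_orderOf_eq_two {α : Type*} [Fintype α] [DecidableEq α]
    (h6 : 6 ≤ Fintype.card α) (h8 : Fintype.card α < 8) {σ τ : alternatingGroup α}
    (hσ : orderOf σ = 2) (hτ : orderOf τ = 2) : IsConj σ τ := by
  have hσ' := cycleType_eq_replicate_two_two h8 (by rwa [Subgroup.orderOf_coe])
    (mem_alternatingGroup.1 σ.2)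
  have hτ' := cycleType_eq_replicate_two_two h8 (by rwa [Subgroup.orderOf_coe])
    (mem_alternatingGroup.1 τ.2)
  refine alternatingGroup.isConj_of (isConj_iff_cycleType_eq.2 (hσ'.trans hτ'.symm)) ?_
  rw [← sum_cycleType, hσ']
  simpa using h6

open Equiv.Perm in
theorem alternatingGroup.exists_injective_dihedralGroup_four {n : ℕ} (hn : n = 6 ∨ n = 7) :
    ∃ g : DihedralGroup 4 →* alternatingGroup (Fin n), Function.Injective g := by
  obtain ⟨x, y, ho, hx, hy, hxy⟩ : ∃ x y : alternatingGroup (Fin n),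
      orderOf x = 4 ∧ x ^ 4 = 1 ∧ y ^ 2 = 1 ∧ y * x * y⁻¹ = x⁻¹ := by
    rcases hn with rfl | rfl <;>
    refine ⟨⟨c[0, 1, 2, 3] * c[4, 5], by rw [mem_alternatingGroup]; decide⟩,
      ⟨c[0, 2] * c[4, 5], by rw [mem_alternatingGroup]; decide⟩,
      orderOf_eq_prime_pow (p := 2) (n := 1) (by decide) (by decide),
      Subtype.ext (by decide), Subtype.ext (by decide), Subtype.ext (by decide)⟩
  exact ⟨_, DihedralGroup.lift_injective (by norm_num) ho hx hy hxy⟩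

theorem alternatingGroup.nonempty_sylow_two_mulEquiv_dihedralGroup {n : ℕ} (hn : n = 6 ∨ n = 7)
    (R : Sylow 2 (alternatingGroup (Fin n))) : Nonempty (R ≃* DihedralGroup 4) := by
  obtain ⟨g, hg⟩ := alternatingGroup.exists_injective_dihedralGroup_four hn
  have hD : Nat.card g.range = 2 ^ 3 := by
    rw [← Nat.card_congr (MonoidHom.ofInjective hg).toEquiv, DihedralGroup.nat_card]; rfl
  have hindex : ¬ 2 ∣ g.range.index := by
    have hcard := g.range.card_mul_index
    have : Nontrivial (Fin n) := by rcases hn with rfl | rfl <;> infer_instance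
    rw [hD, nat_card_alternatingGroup, Nat.card_fin] at hcard
    rcases hn with rfl | rfl <;> norm_num [Nat.factorial] at hcard <;> omega
  exact ⟨(Sylow.equiv R ((IsPGroup.of_card hD).toSylow hindex)).trans
    (MonoidHom.ofInjective hg).symm⟩

theorem nonempty_sylow_two_mulEquiv_dihedralGroup_of_odd_card_ker {n : ℕ} (hn : n = 6 ∨ n = 7)
    {G : Type*} [Group G] [Finite G] (F : G →* alternatingGroup (Fin n))
    (hF : Function.Surjective F) (hker : Odd (Nat.card F.ker)) (P : Sylow 2 G) :
    Nonempty (P ≃* DihedralGroup 4) := by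
  obtain ⟨e₁⟩ := P.nonempty_mulEquiv_map_of_not_dvd_card_ker F
    (by rw [← even_iff_two_dvd]; exact Nat.not_even_iff_odd.2 hker)
  obtain ⟨e₂⟩ :=
    alternatingGroup.nonempty_sylow_two_mulEquiv_dihedralGroup hn (P.mapSurjective hF)
  exact ⟨e₁.trans e₂⟩

theorem nonempty_sylow_two_mulEquiv_quaternionGroup_of_card_ker_eq_six {n : ℕ}
    (hn : n = 6 ∨ n = 7) {G : Type*} [Group G] [Finite G] (hG : commutator G = ⊤)
    (F : G →* alternatingGroup (Fin n)) (hF : Function.Surjective F)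
    (hcent : F.ker ≤ Subgroup.center G) (hker : Nat.card F.ker = 6) (P : Sylow 2 G) :
    Nonempty (P ≃* QuaternionGroup 4) := by
  have hP : Nat.card P = 2 ^ 4 := by
    have : Nontrivial (Fin n) := by rcases hn with rfl | rfl <;> infer_instance
    have hcard := MonoidHom.card_eq_card_ker_mul_of_surjective hF
    rw [hker, nat_card_alternatingGroup, Nat.card_fin] at hcard
    rcases hn with rfl | rfl
    · exact P.card_eq_pow_of_card_eq_pow_mul (m := 135) (by rw [hcard]; decide) (by decide)
    · exact P.card_eq_pow_of_card_eq_pow_mul (m := 945) (by rw [hcard]; decide) (by decide)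
  obtain ⟨ψ⟩ : Nonempty ((P : Subgroup G).map F ≃* DihedralGroup 4) :=
    alternatingGroup.nonempty_sylow_two_mulEquiv_dihedralGroup hn (P.mapSurjective hF)
  set f : P →* DihedralGroup 4 := ψ.toMonoidHom.comp (F.subgroupMap P)
  have hf : Function.Surjective f := ψ.surjective.comp (F.subgroupMap_surjective P)
  have hfF (w : P) : f w = 1 ↔ F w = 1 := by
    dsimp only [f]
    rw [MonoidHom.comp_apply, MulEquiv.coe_toMonoidHom, MulEquiv.map_eq_one_iff, Subtype.ext_iff]
    rfl
  have hfker : Nat.card f.ker = 2 := by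
    have := MonoidHom.card_eq_card_ker_mul_of_surjective hf
    rw [hP, DihedralGroup.nat_card] at this
    omega
  have horder (v : P) (hv : f v ^ 2 = 1) (hv1 : f v ≠ 1) : orderOf (F v) = 2 := by
    have hv2 := (hfF (v ^ 2)).1 (by rw [map_pow, hv])
    rw [Subgroup.coe_pow, map_pow] at hv2
    exact orderOf_eq_prime hv2 fun h => hv1 ((hfF v).2 h)
  refine QuaternionGroup.nonempty_mulEquiv_of_card_ker_eq_two (by decide) f hf hfker ?_
  by_contra! ⟨t, ht, hft⟩
  obtain ⟨w, hw, hw1, hw2⟩ := exists_lift_sq_ne_one_of_commutator_eq_top hG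
    (Nat.odd_iff.2 (Nat.two_dvd_ne_zero.1 P.not_dvd_index)) (by decide) f hf hfker
    fun z hz => hcent ((hfF z).1 hz)
  have h67 : 6 ≤ Fintype.card (Fin n) ∧ Fintype.card (Fin n) < 8 := by
    rcases hn with rfl | rfl <;> simp
  refine hw2 (Subtype.ext <| sq_eq_one_of_isConj hF hcent (m := 3) (by decide) hker
    (congrArg Subtype.val ht) (alternatingGroup.isConj_of_orderOf_eq_two h67.1 h67.2
      (horder t (by rw [← map_pow, ht, map_one]) hft) (horder w hw hw1)) (k := 4) ?_)
  rw [← hP]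
  exact congrArg Subtype.val (pow_card_eq_one' (x := w))

/-- Let `n ∈ {6, 7}`. If `G` is a finite perfect group with a cyclic
central subgroup `Z` of order 3 such that `G/Z ≅ A_n` (i.e. `G` is the triple cover
`3.A_n`), then every Sylow 2-subgroup of `G` is isomorphic to the dihedral group of
order 8. If instead `Z` is cyclic central of order 6 (i.e. `G` is the six-fold cover
`6.A_n`), then every Sylow 2-subgroup of `G` is isomorphic to the generalized quaternion
group of order 16. -/
theorem sylow_two_of_exceptional_covers (n : ℕ) (hn : n = 6 ∨ n = 7) :
    (∀ (G : Type) (_ : Group G) (_ : Finite G) (Z : Subgroup G) (_ : Z.Normal),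
      commutator G = ⊤ → Z ≤ Subgroup.center G → IsCyclic Z → Nat.card Z = 3 →
      Nonempty ((G ⧸ Z) ≃* alternatingGroup (Fin n)) →
      ∀ P : Sylow 2 G, Nonempty (↥(P : Subgroup G) ≃* DihedralGroup 4)) ∧
    (∀ (G : Type) (_ : Group G) (_ : Finite G) (Z : Subgroup G) (_ : Z.Normal),
      commutator G = ⊤ → Z ≤ Subgroup.center G → IsCyclic Z → Nat.card Z = 6 →
      Nonempty ((G ⧸ Z) ≃* alternatingGroup (Fin n)) →
      ∀ P : Sylow 2 G, Nonempty (↥(P : Subgroup G) ≃* QuaternionGroup 4)) := by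
  have cover (G : Type) [Group G] (Z : Subgroup G) [Z.Normal]
      (e : G ⧸ Z ≃* alternatingGroup (Fin n)) :
      ∃ F : G →* alternatingGroup (Fin n), Function.Surjective F ∧ F.ker = Z :=
    ⟨(e : G ⧸ Z →* alternatingGroup (Fin n)).comp (QuotientGroup.mk' Z),
      e.surjective.comp (QuotientGroup.mk'_surjective Z),
      by rw [MonoidHom.ker_mulEquiv_comp, QuotientGroup.ker_mk']⟩
  refine ⟨fun G _ _ Z _ _ _ _ hZ ⟨e⟩ P => ?_, fun G _ _ Z _ hG hZc _ hZ ⟨e⟩ P => ?_⟩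
  · obtain ⟨F, hF, hker⟩ := cover G Z e
    exact nonempty_sylow_two_mulEquiv_dihedralGroup_of_odd_card_ker hn F hF
      (by rw [hker, hZ]; decide) P
  · obtain ⟨F, hF, hker⟩ := cover G Z e
    exact nonempty_sylow_two_mulEquiv_quaternionGroup_of_card_ker_eq_six hn hG F hF
      (hker ▸ hZc) (by rw [hker, hZ]) P
end
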